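/- For ω ∈ S_n, the poset M_ω is B₂-free (contains no four distinct elements w > x > z, w > y > z with x, y incomparable) if and only if ω avoids both patterns 3412 and 3421, i.e., there are no indices i < j < k < l with ω(k) < ω(i) < ω(j) and ω(l) < ω(i). -/
import Mathlib


open Finset

/-- `c_i(ω)`: the number of `j > i` with `ω i > ω j` (the Lehmer code entries). -/
def lehmer {n : ℕ} (ω : Equiv.Perm (Fin n)) (i : Fin n) : ℕ :=
  (univ.filter fun j => i < j ∧ ω j < ω i).card

/-- `c_{i,j}(ω)`: the number of `k` with `i < k < j` and `ω i > ω k`. -/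
def cij {n : ℕ} (ω : Equiv.Perm (Fin n)) (i j : Fin n) : ℕ :=
  (univ.filter fun k => i < k ∧ k < j ∧ ω k < ω i).card

/-- `m_{i,x}(ω) ∈ ℕ^n`, defined coordinatewise. -/
def mvec {n : ℕ} (ω : Equiv.Perm (Fin n)) (i : Fin n) (x : ℕ) : Fin n → ℕ :=
  fun j => if j < i then 0 else if j = i then x
    else if ω j < ω i then 0 else x - cij ω i j

/-- The set `M_ω` of join-irreducibles, as a subset of `ℕ^n`. -/
def MSet {n : ℕ} (ω : Equiv.Perm (Fin n)) : Set (Fin n → ℕ) :=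
  {v | ∃ i : Fin n, ∃ x : ℕ, 1 ≤ x ∧ x ≤ lehmer ω i ∧ v = mvec ω i x}

/-- `M_ω` has a parallelogram pattern. -/
def Parallelogram {n : ℕ} (ω : Equiv.Perm (Fin n)) : Prop :=
  ∃ i j : Fin n, ∃ a b c d : ℕ, i < j ∧
    b < a ∧ 1 ≤ b ∧ a ≤ lehmer ω i ∧
    c < d ∧ 1 ≤ c ∧ d ≤ lehmer ω j ∧
    a + c = b + d ∧
    mvec ω j d < mvec ω i a ∧ mvec ω j c < mvec ω i b ∧
    ¬ mvec ω i b ≤ mvec ω j d ∧ ¬ mvec ω j d ≤ mvec ω i b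

/-- `M_ω` has a `B₂`-pattern: four elements with a max, a min and two incomparable
middle elements. -/
def B2Pattern {n : ℕ} (ω : Equiv.Perm (Fin n)) : Prop :=
  ∃ w x y z : Fin n → ℕ, w ∈ MSet ω ∧ x ∈ MSet ω ∧ y ∈ MSet ω ∧ z ∈ MSet ω ∧
    x < w ∧ y < w ∧ z < x ∧ z < y ∧ ¬ x ≤ y ∧ ¬ y ≤ x

section Aux

variable {n : ℕ} (ω : Equiv.Perm (Fin n))

lemma cij_subadd {p i j : Fin n} (hpi : p < i) (hv : ω p < ω i) :
    cij ω p j ≤ cij ω p i + cij ω i j := by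
  unfold cij
  refine le_trans (card_le_card ?_) (card_union_le _ _)
  intro k hk
  simp only [mem_filter, mem_union, mem_univ, true_and] at *
  rcases lt_trichotomy k i with h | h | h
  · exact Or.inl ⟨hk.1, h, hk.2.2⟩
  · subst h; exact absurd (hk.2.2.trans hv) (lt_irrefl _)
  · exact Or.inr ⟨h, hk.2.1, hk.2.2.trans hv⟩

lemma lehmer_split {s t : Fin n} (hst : s < t) (hv : ω s < ω t) :
    lehmer ω s = cij ω s t + (univ.filter fun k => t < k ∧ ω k < ω s).card := by
  unfold lehmer cij
  rw [← card_union_of_disjoint]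
  · congr 1
    ext k
    simp only [mem_filter, mem_union, mem_univ, true_and]
    constructor
    · rintro ⟨h1, h2⟩
      rcases lt_trichotomy k t with h | h | h
      · exact Or.inl ⟨h1, h, h2⟩
      · subst h; exact absurd (h2.trans hv) (lt_irrefl _)
      · exact Or.inr ⟨h, h2⟩
    · rintro (⟨h1, _, h3⟩ | ⟨h1, h2⟩)
      · exact ⟨h1, h3⟩
      · exact ⟨hst.trans h1, h2⟩
  · rw [disjoint_left]
    intro k hk hk'
    simp only [mem_filter] at *
    exact absurd (hk.2.2.1.trans hk'.2.1) (lt_irrefl _)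

lemma cij_split {p j q : Fin n} (hpj : p < j) (hjq : j < q) (hv : ω p < ω j) :
    cij ω p q = cij ω p j + (univ.filter fun k => j < k ∧ k < q ∧ ω k < ω p).card := by
  unfold cij
  rw [← card_union_of_disjoint]
  · congr 1
    ext k
    simp only [mem_filter, mem_union, mem_univ, true_and]
    constructor
    · rintro ⟨h1, h2, h3⟩
      rcases lt_trichotomy k j with h | h | h
      · exact Or.inl ⟨h1, h, h3⟩
      · subst h; exact absurd (h3.trans hv) (lt_irrefl _)
      · exact Or.inr ⟨h, h2, h3⟩
    · rintro (⟨h1, h2, h3⟩ | ⟨h1, h2, h3⟩)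
      · exact ⟨h1, h2.trans hjq, h3⟩
      · exact ⟨hpj.trans h1, h2, h3⟩
  · rw [disjoint_left]
    intro k hk hk'
    simp only [mem_filter] at *
    exact absurd (hk.2.2.1.trans hk'.2.1) (lt_irrefl _)

lemma mvec_self (i : Fin n) (x : ℕ) : mvec ω i x i = x := by
  simp [mvec]

lemma mvec_le_iff {i i' : Fin n} {x x' : ℕ} (hx : 1 ≤ x) :
    mvec ω i x ≤ mvec ω i' x' ↔
      ((i = i' ∧ x ≤ x') ∨ (i' < i ∧ ω i' < ω i ∧ x + cij ω i' i ≤ x')) := by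
  constructor
  · intro h
    have hi := h i
    rw [mvec_self] at hi
    unfold mvec at hi
    rcases lt_trichotomy i i' with hc | hc | hc
    · simp [hc] at hi; omega
    · subst hc
      simp at hi
      exact Or.inl ⟨rfl, hi⟩
    · have hne : i ≠ i' := ne_of_gt hc
      simp [not_lt_of_gt hc, hne] at hi
      have hvne : ω i ≠ ω i' := fun h' => hne (ω.injective h')
      by_cases hv : ω i < ω i'
      · simp [hv] at hi; omega
      · have hv' : ω i' < ω i := (lt_or_gt_of_ne hvne.symm).resolve_right hv
        simp [hv] at hi
        exact Or.inr ⟨hc, hv', by omega⟩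
  · rintro (⟨rfl, hxx⟩ | ⟨hii, hvv, hxx⟩) <;> intro j <;> simp only [mvec]
    · split_ifs
      · exact le_refl 0
      · exact hxx
      · exact le_refl 0
      · exact Nat.sub_le_sub_right hxx _
    · by_cases h1 : j < i
      · simp [h1]
      · by_cases h2 : j = i
        · subst h2
          have : ¬ j < i' := not_lt_of_gt hii
          have h3 : j ≠ i' := ne_of_gt hii
          simp [h1, this, h3, not_lt_of_gt hvv]
          omega
        · have hji : i < j := lt_of_le_of_ne (not_lt.mp h1) (Ne.symm h2)
          by_cases h4 : ω j < ω i
          · simp [h1, h2, h4]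
          · have hii'j : ¬ j < i' := not_lt_of_gt (hii.trans hji)
            have hne' : j ≠ i' := ne_of_gt (hii.trans hji)
            have hv2 : ¬ ω j < ω i' := fun hh => h4 (hh.trans hvv)
            simp only [h1, h2, h4, hii'j, hne', if_false]
            have hsub := cij_subadd ω hii hvv (j := j)
            simp only [hv2, if_false]
            omega

lemma mvec_inj {i i' : Fin n} {x x' : ℕ} (hx : 1 ≤ x) (hx' : 1 ≤ x')
    (h : mvec ω i x = mvec ω i' x') : i = i' ∧ x = x' := by
  have h1 := (mvec_le_iff ω hx (i := i) (i' := i') (x := x) (x' := x')).mp h.le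
  have h2 := (mvec_le_iff ω hx' (i := i') (i' := i) (x := x') (x' := x)).mp h.ge
  rcases h1 with ⟨rfl, hxx⟩ | ⟨hii, _, _⟩
  · rcases h2 with ⟨_, hxx'⟩ | ⟨hii, _, _⟩
    · exact ⟨rfl, le_antisymm hxx hxx'⟩
    · exact absurd hii (lt_irrefl _)
  · rcases h2 with ⟨heq, _⟩ | ⟨hii', _, _⟩
    · exact absurd heq (ne_of_lt hii)
    · exact absurd (hii.trans hii') (lt_irrefl _)

lemma mvec_lt_iff {i i' : Fin n} {x x' : ℕ} (hx : 1 ≤ x) (hx' : 1 ≤ x') :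
    mvec ω i x < mvec ω i' x' ↔
      ((i = i' ∧ x < x') ∨ (i' < i ∧ ω i' < ω i ∧ x + cij ω i' i ≤ x')) := by
  rw [lt_iff_le_and_ne, mvec_le_iff ω hx]
  constructor
  · rintro ⟨(⟨rfl, hxx⟩ | hr), hne⟩
    · refine Or.inl ⟨rfl, lt_of_le_of_ne hxx fun h => hne (by rw [h])⟩
    · exact Or.inr hr
  · rintro (⟨rfl, hxx⟩ | ⟨hii, hvv, hxx⟩)
    · exact ⟨Or.inl ⟨rfl, hxx.le⟩, fun h => absurd (mvec_inj ω hx hx' h).2 (ne_of_lt hxx)⟩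
    · exact ⟨Or.inr ⟨hii, hvv, hxx⟩, fun h => absurd (mvec_inj ω hx hx' h).1 (ne_of_gt hii)⟩

/-- The 4-point pattern predicate. -/
def Pat {n : ℕ} (ω : Equiv.Perm (Fin n)) : Prop :=
  ∃ i j k l : Fin n, i < j ∧ j < k ∧ k < l ∧
    ω k < ω i ∧ ω i < ω j ∧ ω l < ω i

lemma pattern_of_two {s t : Fin n} (hst : s < t) (hv : ω s < ω t)
    (h2 : cij ω s t + 2 ≤ lehmer ω s) : Pat ω := by
  have hsplit := lehmer_split ω hst hv
  have hcard : 1 < (univ.filter fun k => t < k ∧ ω k < ω s).card := by omega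
  obtain ⟨k, hk, l, hl, hne⟩ := Finset.one_lt_card.mp hcard
  simp only [mem_filter, mem_univ, true_and] at hk hl
  rcases hne.lt_or_gt with h | h
  · exact ⟨s, t, k, l, hst, hk.1, h, hk.2, hv, hl.2⟩
  · exact ⟨s, t, l, k, hst, hl.1, h, hl.2, hv, hk.2⟩

lemma cij_tri {p i j q : Fin n} (hpi : p < i) (hij : i < j) (hjq : j < q)
    (hvpj : ω p < ω j) (hvji : ω j < ω i) :
    cij ω p q + 1 ≤ cij ω p i + cij ω i q := by
  classical
  set S1 := univ.filter fun k => p < k ∧ k < i ∧ ω k < ω p with hS1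
  set S2 := univ.filter fun k => i < k ∧ k < q ∧ ω k < ω i with hS2
  have hjS2 : j ∈ S2 := by
    simp only [hS2, mem_filter, mem_univ, true_and]
    exact ⟨hij, hjq, hvji⟩
  have hsub : (univ.filter fun k => p < k ∧ k < q ∧ ω k < ω p) ⊆ S1 ∪ S2.erase j := by
    intro k hk
    simp only [mem_filter, mem_univ, true_and] at hk
    simp only [mem_union, hS1, hS2, mem_erase, mem_filter, mem_univ, true_and]
    rcases lt_trichotomy k i with h | h | h
    · exact Or.inl ⟨hk.1, h, hk.2.2⟩
    · subst h; exact absurd (hk.2.2.trans (hvpj.trans hvji)) (lt_irrefl _)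
    · refine Or.inr ⟨?_, h, hk.2.1, hk.2.2.trans (hvpj.trans hvji)⟩
      rintro rfl
      exact absurd (hk.2.2.trans hvpj) (lt_irrefl _)
  have h1 : cij ω p q ≤ S1.card + (S2.erase j).card :=
    le_trans (card_le_card hsub) (card_union_le _ _)
  have h2 : (S2.erase j).card = S2.card - 1 := card_erase_of_mem hjS2
  have h3 : 1 ≤ S2.card := card_pos.mpr ⟨j, hjS2⟩
  have e1 : cij ω p i = S1.card := rfl
  have e2 : cij ω i q = S2.card := rfl
  omega

lemma cij_quad {p i j q : Fin n} (hpi : p < i) (hij : i < j) (hjq : j < q)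
    (hvpi : ω p < ω i) (hvij : ω i < ω j) :
    cij ω p q + cij ω i j ≤ cij ω p j + cij ω i q := by
  rw [cij_split ω (hpi.trans hij) hjq (hvpi.trans hvij), cij_split ω hij hjq hvij]
  have hsub : (univ.filter fun k => j < k ∧ k < q ∧ ω k < ω p) ⊆
      univ.filter fun k => j < k ∧ k < q ∧ ω k < ω i := by
    intro k hk
    simp only [mem_filter, mem_univ, true_and] at *
    exact ⟨hk.1, hk.2.1, hk.2.2.trans hvpi⟩
  have := card_le_card hsub
  omega

lemma core {p i j q : Fin n} {e a b f : ℕ} (he1 : 1 ≤ e) (he2 : e ≤ lehmer ω p)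
    (ha1 : 1 ≤ a) (hb1 : 1 ≤ b) (hf1 : 1 ≤ f) (hij : i < j)
    (hxw : mvec ω i a < mvec ω p e) (hyw : mvec ω j b < mvec ω p e)
    (hzx : mvec ω q f < mvec ω i a) (hzy : mvec ω q f < mvec ω j b)
    (hyx : ¬ mvec ω j b ≤ mvec ω i a) : Pat ω := by
  rw [mvec_lt_iff ω ha1 he1] at hxw
  rw [mvec_lt_iff ω hb1 he1] at hyw
  rw [mvec_lt_iff ω hf1 ha1] at hzx
  rw [mvec_lt_iff ω hf1 hb1] at hzy
  rw [mvec_le_iff ω hb1] at hyx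
  push_neg at hyx
  rcases hzx with ⟨rfl, hfa⟩ | ⟨hiq, hviq, hfa⟩
  · -- q = i : impossible by hzy
    rcases hzy with ⟨h, _⟩ | ⟨h, _, _⟩
    · subst h; exact absurd hij (lt_irrefl _)
    · exact absurd (hij.trans h) (lt_irrefl _)
  rcases hyw with ⟨rfl, hbe⟩ | ⟨hpj, hvpj, hbe⟩
  · -- j = p : impossible by hxw
    rcases hxw with ⟨h, _⟩ | ⟨h, _, _⟩
    · subst h; exact absurd hij (lt_irrefl _)
    · exact absurd (hij.trans h) (lt_irrefl _)
  rcases hzy with ⟨rfl, hfb⟩ | ⟨hjq, hvjq, hfb⟩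
  · -- q = j
    rcases hxw with ⟨rfl, hae⟩ | ⟨hpi, hvpi, hae⟩
    · exact pattern_of_two ω hij hviq (by omega)
    · exact pattern_of_two ω hpj hvpj (by omega)
  · -- j < q
    rcases hxw with ⟨rfl, hae⟩ | ⟨hpi, hvpi, hae⟩
    · exact pattern_of_two ω hiq hviq (by omega)
    · by_cases hvij : ω i < ω j
      · have hlt : a < b + cij ω i j := hyx.2 hij hvij
        have hq := cij_quad ω hpi hij hjq hvpi hvij
        exact pattern_of_two ω (hpi.trans hiq) (hvpi.trans hviq) (by omega)
      · have hvji : ω j < ω i := by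
          have hvne : ω j ≠ ω i := fun h' => (ne_of_lt hij) (ω.injective h'.symm)
          exact (lt_or_gt_of_ne hvne).resolve_right hvij
        have hq := cij_tri ω hpi hij hjq hvpj hvji
        exact pattern_of_two ω (hpi.trans hiq) (hvpi.trans hviq) (by omega)

lemma b2_iff_pat : B2Pattern ω ↔ Pat ω := by
  constructor
  · rintro ⟨w, x, y, z, ⟨p, e, he1, he2, rfl⟩, ⟨i, a, ha1, ha2, rfl⟩,
      ⟨j, b, hb1, hb2, rfl⟩, ⟨q, f, hf1, hf2, rfl⟩, hxw, hyw, hzx, hzy, hxy, hyx⟩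
    have hne : i ≠ j := by
      rintro rfl
      rcases le_total a b with h | h
      · exact hxy ((mvec_le_iff ω ha1).mpr (Or.inl ⟨rfl, h⟩))
      · exact hyx ((mvec_le_iff ω hb1).mpr (Or.inl ⟨rfl, h⟩))
    rcases hne.lt_or_gt with h | h
    · exact core ω he1 he2 ha1 hb1 hf1 h hxw hyw hzx hzy hyx
    · exact core ω he1 he2 hb1 ha1 hf1 h hyw hxw hzy hzx hxy
  · rintro ⟨i, j, k, l, hij, hjk, hkl, hki, hvij, hli⟩
    set c := cij ω i j with hc
    have hbi : c + 2 ≤ lehmer ω i := by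
      rw [lehmer_split ω hij hvij]
      have hsub : ({k, l} : Finset (Fin n)) ⊆
          univ.filter fun m => j < m ∧ ω m < ω i := by
        intro m hm
        simp only [mem_insert, mem_singleton] at hm
        simp only [mem_filter, mem_univ, true_and]
        rcases hm with rfl | rfl
        · exact ⟨hjk, hki⟩
        · exact ⟨hjk.trans hkl, hli⟩
      have := card_le_card hsub
      rw [card_pair (ne_of_lt hkl)] at this
      omega
    have hbj : 2 ≤ lehmer ω j := by
      unfold lehmer
      have hsub : ({k, l} : Finset (Fin n)) ⊆
          univ.filter fun m => j < m ∧ ω m < ω j := by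
        intro m hm
        simp only [mem_insert, mem_singleton] at hm
        simp only [mem_filter, mem_univ, true_and]
        rcases hm with rfl | rfl
        · exact ⟨hjk, hki.trans hvij⟩
        · exact ⟨hjk.trans hkl, hli.trans hvij⟩
      have := card_le_card hsub
      rw [card_pair (ne_of_lt hkl)] at this
      omega
    refine ⟨mvec ω i (c + 2), mvec ω i (c + 1), mvec ω j 2, mvec ω j 1,
      ⟨i, c + 2, by omega, hbi, rfl⟩, ⟨i, c + 1, by omega, by omega, rfl⟩,
      ⟨j, 2, by omega, hbj, rfl⟩, ⟨j, 1, by omega, by omega, rfl⟩, ?_, ?_, ?_, ?_, ?_, ?_⟩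
    · exact (mvec_lt_iff ω (by omega) (by omega)).mpr (Or.inl ⟨rfl, by omega⟩)
    · exact (mvec_lt_iff ω (by omega) (by omega)).mpr (Or.inr ⟨hij, hvij, by omega⟩)
    · exact (mvec_lt_iff ω (by omega) (by omega)).mpr (Or.inr ⟨hij, hvij, by omega⟩)
    · exact (mvec_lt_iff ω (by omega) (by omega)).mpr (Or.inl ⟨rfl, by omega⟩)
    · intro h
      rcases (mvec_le_iff ω (by omega)).mp h with ⟨h1, _⟩ | ⟨h1, _, _⟩
      · exact absurd h1 (ne_of_lt hij)
      · exact absurd (h1.trans hij) (lt_irrefl _)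
    · intro h
      rcases (mvec_le_iff ω (by omega)).mp h with ⟨h1, _⟩ | ⟨_, _, h3⟩
      · exact absurd h1 (ne_of_gt hij)
      · omega

end Aux

theorem stmt13 (n : ℕ) (ω : Equiv.Perm (Fin n)) :
    ¬ B2Pattern ω ↔
      ¬ ∃ i j k l : Fin n, i < j ∧ j < k ∧ k < l ∧
        ω k < ω i ∧ ω i < ω j ∧ ω l < ω i := by
  exact not_congr (b2_iff_pat ω)
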